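/- arXiv:1604.02097 — 2 statements merged into one kernel-verified Lean document; each statement's English description precedes it below -/
import Mathlib

section
/- Fix β ≥ β' ≥ 0 and an initial state x₀ = (x₀₁, x₀₂) with positive integer entries. Then for every n ≥ 1, the time of the n-th tie satisfies T_n(β,1,x₀) ⪰ T_n(β',1,x₀), while the duration (time of the last tie) satisfies T(β,1,x₀) ⪯ T(β',1,x₀); i.e., for every t, P[T_n(β,1,x₀) ≥ t] ≥ P[T_n(β',1,x₀) ≥ t] and P[T(β,1,x₀) ≥ t] ≤ P[T(β',1,x₀) ≥ t]. -/
/-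
With equal fitness the urn is symmetric under swapping the colours, so all that matters is the gap
`|X₁ - X₂|` (the total `X₁ + X₂` grows deterministically). The gap widens with probability
`max^β / (max^β + min^β)`, which increases both with the gap at a fixed total and with `β` (for
`β ≥ 0`). A step-by-step coupling therefore shows that, for every coordinatewise monotone
functional of the gap sequence, the expectation increases with `β`. The event `{T_n ≥ t}` says
that fewer than `n` of the gaps at times `< t` vanish, which is monotone in the gaps; the event
`{T ≥ t}` says that some gap at a time `≥ t` vanishes, which is antitone.
-/

open MeasureTheory Filter

noncomputable section

/-- Transition probability of the nonlinear Pólya urn with feedback strength `β` and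
fitness ratio `r`: from `(x₁,x₂)` move to `(x₁+1,x₂)` with probability
`r·x₁^β/(r·x₁^β + x₂^β)`, to `(x₁,x₂+1)` with probability `x₂^β/(r·x₁^β + x₂^β)`,
and nowhere else. -/
def urnStep (β r : ℝ) (x y : ℕ × ℕ) : ℝ :=
  if y = (x.1 + 1, x.2) then r * (x.1 : ℝ) ^ β / (r * (x.1 : ℝ) ^ β + (x.2 : ℝ) ^ β)
  else if y = (x.1, x.2 + 1) then (x.2 : ℝ) ^ β / (r * (x.1 : ℝ) ^ β + (x.2 : ℝ) ^ β)
  else 0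

/-- `μ` is the law (on trajectories `ℕ → ℕ × ℕ`) of a `(β,r,x₀)`-urn process:
a probability measure under which each finite initial trajectory starting at `x₀`
has probability equal to the product of the one-step urn transition probabilities. -/
def IsUrnProcess (μ : Measure (ℕ → ℕ × ℕ)) (β r : ℝ) (x₀ : ℕ × ℕ) : Prop :=
  IsProbabilityMeasure μ ∧
  ∀ (n : ℕ) (path : ℕ → ℕ × ℕ), path 0 = x₀ →
    (μ {ω | ∀ t ≤ n, ω t = path t}).toReal
      = ∏ t ∈ Finset.range n, urnStep β r (path t) (path (t + 1))

/-- `N_t`: the number of ties up to (and including) time `t`. -/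
def numTiesUpTo (ω : ℕ → ℕ × ℕ) (t : ℕ) : ℕ :=
  ((Finset.range (t + 1)).filter (fun j => (ω j).1 = (ω j).2)).card

/-- The intensity `N`: the total number of ties (possibly `∞`). -/
def intensity (ω : ℕ → ℕ × ℕ) : ℕ∞ :=
  {t : ℕ | (ω t).1 = (ω t).2}.encard

/-- `T_n` (for `n ≥ 1`): the time of the `n`-th tie, i.e. the (unique, if it exists) time `s`
at which a tie occurs and the number of ties up to `s` equals `n`; `⊤` if there is no such time. -/
def nthTieTime (n : ℕ) (ω : ℕ → ℕ × ℕ) : ℕ∞ :=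
  sInf {t : ℕ∞ | ∃ s : ℕ, t = (s : ℕ∞) ∧ (ω s).1 = (ω s).2 ∧ numTiesUpTo ω s = n}

/-- The event `{T ≥ t}` where `T` is the duration (time of the last tie, with the convention
`T = -1` if there is no tie): for `t : ℕ` this event is exactly `{∃ s ≥ t, a tie occurs at s}`. -/
def durationTail (t : ℕ) : Set (ℕ → ℕ × ℕ) :=
  {ω | ∃ s, t ≤ s ∧ (ω s).1 = (ω s).2}

open scoped Finset

lemma mul_add_mul_le_of_weight_le {p q p' q' A B A' B' : ℝ} (hp : 0 ≤ p) (hq : 0 ≤ q)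
    (hpq : p + q = 1) (hpq' : p' + q' = 1) (hpp' : p ≤ p')
    (hA : A ≤ A') (hB : B ≤ B') (hBA : B' ≤ A') :
    p * A + q * B ≤ p' * A' + q' * B' := by
  obtain rfl := eq_sub_of_add_eq' hpq
  obtain rfl := eq_sub_of_add_eq' hpq'
  nlinarith [mul_le_mul_of_nonneg_left hA hp, mul_le_mul_of_nonneg_left hB hq,
    mul_nonneg (sub_nonneg.2 hpp') (sub_nonneg.2 hBA)]

lemma IsUpperSet.monotone_indicator_one {α : Type*} [Preorder α] {A : Set α} (hA : IsUpperSet A) :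
    Monotone (A.indicator (1 : α → ℝ)) := fun a b hab => by
  by_cases ha : a ∈ A
  · simp [ha, hA hab ha]
  · simp [ha, Set.indicator_nonneg]

lemma IsLowerSet.antitone_indicator_one {α : Type*} [Preorder α] {A : Set α} (hA : IsLowerSet A) :
    Antitone (A.indicator (1 : α → ℝ)) := fun a b hab => by
  by_cases hb : b ∈ A
  · simp [hb, hA hab hb]
  · simp [hb, Set.indicator_nonneg]

def gap (x : ℕ × ℕ) : ℕ := Nat.dist x.1 x.2

def move (x : ℕ × ℕ) : Bool → ℕ × ℕ
  | true => (x.1 + 1, x.2)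
  | false => (x.1, x.2 + 1)

def moveProb (β : ℝ) (x : ℕ × ℕ) : Bool → ℝ
  | true => (x.1 : ℝ) ^ β / ((x.1 : ℝ) ^ β + (x.2 : ℝ) ^ β)
  | false => (x.2 : ℝ) ^ β / ((x.1 : ℝ) ^ β + (x.2 : ℝ) ^ β)

lemma urnStep_one_move (β : ℝ) (x : ℕ × ℕ) (b : Bool) :
    urnStep β 1 x (move x b) = moveProb β x b := by
  cases b <;> simp [urnStep, move, moveProb]

lemma move_injective (x : ℕ × ℕ) : Function.Injective (move x) := by
  intro b b'
  cases b <;> cases b' <;> simp [move]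

lemma moveProb_nonneg (β : ℝ) (x : ℕ × ℕ) (b : Bool) : 0 ≤ moveProb β x b := by
  cases b <;> simp only [moveProb] <;> positivity

lemma moveProb_true_add_false (β : ℝ) {x : ℕ × ℕ} (h₁ : 0 < x.1) (h₂ : 0 < x.2) :
    moveProb β x true + moveProb β x false = 1 := by
  have : 0 < (x.1 : ℝ) ^ β + (x.2 : ℝ) ^ β := by positivity
  rw [moveProb, moveProb, ← add_div, div_self this.ne']

lemma moveProb_swap (β : ℝ) (x : ℕ × ℕ) (b : Bool) :
    moveProb β x.swap b = moveProb β x (!b) := by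
  cases b <;> simp [moveProb, add_comm]

lemma move_swap (x : ℕ × ℕ) (b : Bool) : move x.swap b = (move x (!b)).swap := by
  cases b <;> rfl

lemma gap_swap (x : ℕ × ℕ) : gap x.swap = gap x := Nat.dist_comm _ _

lemma moveProb_true_le_of_le {β : ℝ} (hβ : 0 ≤ β) {a b a' b' : ℕ} (hb' : 0 < b') (ha : a ≤ a')
    (hb : b' ≤ b) : moveProb β (a, b) true ≤ moveProb β (a', b') true := by
  have hb₀ : 0 < b := hb'.trans_le hb
  simp only [moveProb]
  rw [div_le_div_iff₀ (by positivity) (by positivity)]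
  have : (a : ℝ) ^ β * (b' : ℝ) ^ β ≤ (a' : ℝ) ^ β * (b : ℝ) ^ β := by
    gcongr
  nlinarith

lemma moveProb_true_le_of_exponent_le {β β' : ℝ} (hββ' : β' ≤ β) {a b : ℕ}
    (hb : 0 < b) (hba : b ≤ a) : moveProb β' (a, b) true ≤ moveProb β (a, b) true := by
  have ha : (0 : ℝ) < a := by exact_mod_cast hb.trans_le hba
  have hb : (0 : ℝ) < b := by exact_mod_cast hb
  simp only [moveProb]
  rw [div_le_div_iff₀ (by positivity) (by positivity)]
  have key : ((b : ℝ) / a) ^ β ≤ ((b : ℝ) / a) ^ β' :=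
    Real.rpow_le_rpow_of_exponent_ge (by positivity)
      ((div_le_one ha).2 (by exact_mod_cast hba)) hββ'
  rw [Real.div_rpow hb.le ha.le, Real.div_rpow hb.le ha.le,
    div_le_div_iff₀ (by positivity) (by positivity)] at key
  nlinarith

/-- `gapExpect β m x f` is the expectation of `f (gap X₀, …, gap X_{m-1})` for the urn with
`r = 1` started at `X₀ = x`. -/
def gapExpect (β : ℝ) : (m : ℕ) → ℕ × ℕ → ((Fin m → ℕ) → ℝ) → ℝ
  | 0, _, f => f Fin.elim0
  | m + 1, x, f =>
    ∑ b, moveProb β x b * gapExpect β m (move x b) (fun l => f (Fin.cons (gap x) l))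

section gapExpect

variable {β : ℝ} {m : ℕ}

lemma gapExpect_succ (x : ℕ × ℕ) (f : (Fin (m + 1) → ℕ) → ℝ) :
    gapExpect β (m + 1) x f =
      moveProb β x true * gapExpect β m (x.1 + 1, x.2) (fun l => f (Fin.cons (gap x) l)) +
      moveProb β x false * gapExpect β m (x.1, x.2 + 1) (fun l => f (Fin.cons (gap x) l)) :=
  Fintype.sum_bool _

lemma gapExpect_neg (x : ℕ × ℕ) (f : (Fin m → ℕ) → ℝ) :
    gapExpect β m x (-f) = -gapExpect β m x f := by
  induction m generalizing x with
  | zero => rfl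
  | succ m ih =>
    simp only [gapExpect, Pi.neg_apply, ← Pi.neg_def, ih, mul_neg, Finset.sum_neg_distrib]

lemma gapExpect_mono {x : ℕ × ℕ} {f g : (Fin m → ℕ) → ℝ} (hfg : f ≤ g) :
    gapExpect β m x f ≤ gapExpect β m x g := by
  induction m generalizing x with
  | zero => exact hfg _
  | succ m ih =>
    exact Finset.sum_le_sum fun b _ =>
      mul_le_mul_of_nonneg_left (ih fun l => hfg _) (moveProb_nonneg β x b)

lemma gapExpect_const {x : ℕ × ℕ} (h₁ : 0 < x.1) (h₂ : 0 < x.2) (c : ℝ) :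
    gapExpect β m x (fun _ => c) = c := by
  induction m generalizing x with
  | zero => rfl
  | succ m ih =>
    rw [gapExpect_succ, ih (x := (x.1 + 1, x.2)) x.1.succ_pos h₂,
      ih (x := (x.1, x.2 + 1)) h₁ x.2.succ_pos, ← add_mul, moveProb_true_add_false β h₁ h₂, one_mul]

lemma gapExpect_swap (x : ℕ × ℕ) (f : (Fin m → ℕ) → ℝ) :
    gapExpect β m x.swap f = gapExpect β m x f := by
  induction m generalizing x with
  | zero => rfl
  | succ m ih =>
    simp only [gapExpect, moveProb_swap, move_swap, ih, gap_swap]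
    exact Fintype.sum_equiv (Equiv.ofBijective _ Bool.not_bijective) _ _ fun b => by simp

lemma gapExpect_sort (x : ℕ × ℕ) (f : (Fin m → ℕ) → ℝ) :
    gapExpect β m (max x.1 x.2, min x.1 x.2) f = gapExpect β m x f := by
  rcases le_total x.2 x.1 with h | h
  · rw [max_eq_left h, min_eq_right h]
  · rw [max_eq_right h, min_eq_left h, ← gapExpect_swap]
    rfl

lemma Monotone.apply_cons {f : (Fin (m + 1) → ℕ) → ℝ} (hf : Monotone f) (c : ℕ) :
    Monotone fun l => f (Fin.cons c l) :=
  fun _ _ hl => hf (Fin.cons_le_cons.2 ⟨le_rfl, hl⟩)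

lemma Monotone.apply_cons_le_apply_cons {f : (Fin (m + 1) → ℕ) → ℝ} (hf : Monotone f) {c c' : ℕ}
    (hc : c ≤ c') : (fun l => f (Fin.cons c l)) ≤ fun l => f (Fin.cons c' l) :=
  fun _ => hf (Fin.cons_le_cons.2 ⟨hc, le_rfl⟩)

theorem gapExpect_le_of_gap_le (hβ : 0 ≤ β) {f : (Fin m → ℕ) → ℝ} (hf : Monotone f)
    {x x' : ℕ × ℕ} (h₁ : 0 < x.1) (h₂ : 0 < x.2) (h₁' : 0 < x'.1) (h₂' : 0 < x'.2)
    (hsum : x.1 + x.2 = x'.1 + x'.2) (hgap : gap x ≤ gap x') :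
    gapExpect β m x f ≤ gapExpect β m x' f := by
  induction m generalizing x x' with
  | zero => exact le_rfl
  | succ m ih =>
    rw [← gapExpect_sort x, ← gapExpect_sort x']
    simp only [gap, Nat.dist] at hgap
    set a := max x.1 x.2
    set b := min x.1 x.2
    set a' := max x'.1 x'.2
    set b' := min x'.1 x'.2
    have hb : 0 < b := by omega
    have hb' : 0 < b' := by omega
    have hc : gap (a, b) ≤ gap (a', b') := by simp only [gap, Nat.dist]; omega
    have hg' := hf.apply_cons (gap (a', b'))
    have hgg' := hf.apply_cons_le_apply_cons hc
    have hA := (gapExpect_mono (β := β) (x := (a + 1, b)) hgg').trans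
      (ih (x := (a + 1, b)) (x' := (a' + 1, b')) hg' (by simp) hb (by simp) hb' (by simp; omega)
        (by simp only [gap, Nat.dist]; omega))
    have hB := (gapExpect_mono (β := β) (x := (a, b + 1)) hgg').trans
      (ih (x := (a, b + 1)) (x' := (a', b' + 1)) hg' (by simp; omega) (by simp) (by simp; omega)
        (by simp) (by simp; omega) (by simp only [gap, Nat.dist]; omega))
    have hBA := ih (x := (a', b' + 1)) (x' := (a' + 1, b')) hg' (by simp; omega) (by simp) (by simp)
      hb' (by simp; omega) (by simp only [gap, Nat.dist]; omega)
    have hp := moveProb_true_le_of_le (β := β) hβ hb' (show a ≤ a' by omega) (show b' ≤ b by omega)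
    rw [gapExpect_succ, gapExpect_succ]
    exact mul_add_mul_le_of_weight_le (moveProb_nonneg _ _ _) (moveProb_nonneg _ _ _)
      (moveProb_true_add_false β (x := (a, b)) (by omega) hb)
      (moveProb_true_add_false β (x := (a', b')) (by omega) hb') hp hA hB hBA

theorem gapExpect_le_of_exponent_le {β' : ℝ} (hβ : 0 ≤ β) (hββ' : β' ≤ β)
    {f : (Fin m → ℕ) → ℝ} (hf : Monotone f) {x : ℕ × ℕ} (h₁ : 0 < x.1) (h₂ : 0 < x.2) :
    gapExpect β' m x f ≤ gapExpect β m x f := by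
  induction m generalizing x with
  | zero => exact le_rfl
  | succ m ih =>
    rw [← gapExpect_sort x, ← gapExpect_sort (β := β) x]
    set a := max x.1 x.2
    set b := min x.1 x.2
    have hb : 0 < b := by omega
    have hg := hf.apply_cons (gap (a, b))
    have hA := ih hg (x := (a + 1, b)) (by simp) hb
    have hB := ih hg (x := (a, b + 1)) (by simp; omega) (by simp)
    have hBA := gapExpect_le_of_gap_le (β := β) hβ hg (x := (a, b + 1)) (x' := (a + 1, b))
      (by simp; omega) (by simp) (by simp) hb (by simp; omega)
      (by simp only [gap, Nat.dist]; omega)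
    have hp := moveProb_true_le_of_exponent_le hββ' hb (show b ≤ a by omega)
    rw [gapExpect_succ, gapExpect_succ]
    exact mul_add_mul_le_of_weight_le (moveProb_nonneg _ _ _) (moveProb_nonneg _ _ _)
      (moveProb_true_add_false β' (x := (a, b)) (by omega) hb)
      (moveProb_true_add_false β (x := (a, b)) (by omega) hb) hp hA hB hBA

theorem gapExpect_le_of_exponent_le_of_antitone {β' : ℝ} (hβ : 0 ≤ β) (hββ' : β' ≤ β)
    {f : (Fin m → ℕ) → ℝ} (hf : Antitone f) {x : ℕ × ℕ} (h₁ : 0 < x.1) (h₂ : 0 < x.2) :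
    gapExpect β m x f ≤ gapExpect β' m x f := by
  have := gapExpect_le_of_exponent_le (f := -f) hβ hββ' hf.neg h₁ h₂
  rwa [gapExpect_neg, gapExpect_neg, neg_le_neg_iff] at this

end gapExpect

def gapSeq (m : ℕ) (ω : ℕ → ℕ × ℕ) : Fin m → ℕ := fun j => gap (ω j)

def wordPath : {m : ℕ} → ℕ × ℕ → (Fin m → Bool) → ℕ → ℕ × ℕ
  | 0, x, _, _ => x
  | _ + 1, x, _, 0 => x
  | _ + 1, x, w, t + 1 => wordPath (move x (w 0)) (Fin.tail w) t

def wordWeight (β : ℝ) {m : ℕ} (x : ℕ × ℕ) (w : Fin m → Bool) : ℝ :=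
  ∏ t ∈ Finset.range m, urnStep β 1 (wordPath x w t) (wordPath x w (t + 1))

section wordPath

variable {m : ℕ}

@[simp]
lemma wordPath_zero (x : ℕ × ℕ) (w : Fin m → Bool) : wordPath x w 0 = x := by
  cases m <;> rfl

@[simp]
lemma wordPath_cons_succ (x : ℕ × ℕ) (b : Bool) (w : Fin m → Bool) (t : ℕ) :
    wordPath x (Fin.cons b w : Fin (m + 1) → Bool) (t + 1) = wordPath (move x b) w t := by
  simp [wordPath]

lemma wordWeight_cons (β : ℝ) (x : ℕ × ℕ) (b : Bool) (w : Fin m → Bool) :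
    wordWeight β x (Fin.cons b w : Fin (m + 1) → Bool) =
      moveProb β x b * wordWeight β (move x b) w := by
  rw [wordWeight, Finset.prod_range_succ', mul_comm]
  simp [wordWeight, urnStep_one_move]

lemma gapSeq_wordPath_cons (x : ℕ × ℕ) (b : Bool) (w : Fin m → Bool) :
    gapSeq (m + 1) (wordPath x (Fin.cons b w : Fin (m + 1) → Bool)) =
      Fin.cons (gap x) (gapSeq m (wordPath (move x b) w)) := by
  ext j
  cases j using Fin.cases <;> simp [gapSeq]

lemma gapExpect_eq_sum (β : ℝ) (x : ℕ × ℕ) (f : (Fin m → ℕ) → ℝ) :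
    gapExpect β m x f = ∑ w : Fin m → Bool, wordWeight β x w * f (gapSeq m (wordPath x w)) := by
  induction m generalizing x with
  | zero =>
    simpa [gapExpect, wordWeight] using congrArg f (Subsingleton.elim _ _)
  | succ m ih =>
    rw [← (Fin.consEquiv fun _ => Bool).sum_comp, Fintype.sum_prod_type, gapExpect]
    refine Finset.sum_congr rfl fun b _ => ?_
    rw [ih, Finset.mul_sum]
    refine Finset.sum_congr rfl fun w _ => ?_
    rw [show (Fin.consEquiv fun _ => Bool) (b, w) = Fin.cons b w from rfl, wordWeight_cons,
      gapSeq_wordPath_cons, mul_assoc]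

lemma wordPath_injective {x : ℕ × ℕ} {w w' : Fin m → Bool}
    (h : ∀ t ≤ m, wordPath x w t = wordPath x w' t) : w = w' := by
  induction m generalizing x with
  | zero => exact Subsingleton.elim _ _
  | succ m ih =>
    cases w using Fin.consCases with | cons b w =>
    cases w' using Fin.consCases with | cons b' w' =>
    obtain rfl : b = b' := move_injective x (by simpa using h 1 (by omega))
    exact congrArg _ (ih (x := move x b) fun t ht => by simpa using h (t + 1) (by omega))

def wordCylinder {m : ℕ} (x : ℕ × ℕ) (w : Fin m → Bool) : Set (ℕ → ℕ × ℕ) :=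
  {ω | ∀ t ≤ m, ω t = wordPath x w t}

lemma measurableSet_wordCylinder (x : ℕ × ℕ) (w : Fin m → Bool) :
    MeasurableSet (wordCylinder x w) := by
  simp only [wordCylinder, Set.ofPred_forall]
  exact MeasurableSet.iInter fun t => MeasurableSet.iInter fun _ =>
    measurableSet_eq_fun (measurable_pi_apply t) measurable_const

lemma pairwise_disjoint_wordCylinder (x : ℕ × ℕ) :
    Pairwise (Function.onFun Disjoint (wordCylinder (m := m) x)) := fun _ _ hne =>
  Set.disjoint_left.2 fun _ hω hω' =>
    hne (wordPath_injective fun t ht => (hω t ht).symm.trans (hω' t ht))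

end wordPath

namespace IsUrnProcess

variable {μ μ' : Measure (ℕ → ℕ × ℕ)} {β β' : ℝ} {x₀ : ℕ × ℕ} {m : ℕ}

lemma toReal_measure_wordCylinder (hμ : IsUrnProcess μ β 1 x₀) (w : Fin m → Bool) :
    (μ (wordCylinder x₀ w)).toReal = wordWeight β x₀ w :=
  hμ.2 m _ (wordPath_zero x₀ w)

/-- The cylinder weights already sum to one. -/
lemma measure_compl_iUnion_wordCylinder (hμ : IsUrnProcess μ β 1 x₀) (h₁ : 0 < x₀.1)
    (h₂ : 0 < x₀.2) : μ (⋃ w : Fin m → Bool, wordCylinder x₀ w)ᶜ = 0 := by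
  have := hμ.1
  rw [prob_compl_eq_zero_iff (MeasurableSet.iUnion (measurableSet_wordCylinder x₀)),
    measure_iUnion (pairwise_disjoint_wordCylinder x₀) (measurableSet_wordCylinder x₀),
    tsum_fintype, ← ENNReal.toReal_eq_one_iff,
    ENNReal.toReal_sum fun w _ => measure_ne_top μ _]
  simp only [hμ.toReal_measure_wordCylinder]
  simpa using (gapExpect_eq_sum β x₀ (fun _ => (1 : ℝ))).symm.trans (gapExpect_const h₁ h₂ 1)

theorem toReal_measure_eq_gapExpect (hμ : IsUrnProcess μ β 1 x₀) (h₁ : 0 < x₀.1)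
    (h₂ : 0 < x₀.2) {A : Set (Fin m → ℕ)} {E : Set (ℕ → ℕ × ℕ)}
    (hE : ∀ ω, ω 0 = x₀ → (ω ∈ E ↔ gapSeq m ω ∈ A)) :
    (μ E).toReal = gapExpect β m x₀ (A.indicator 1) := by
  classical
  have := hμ.1
  set good := Finset.univ.filter fun w : Fin m → Bool => gapSeq m (wordPath x₀ w) ∈ A
  have hgap : ∀ w, ∀ ω ∈ wordCylinder x₀ w, gapSeq m ω = gapSeq m (wordPath x₀ w) :=
    fun w ω hω => funext fun j => congrArg gap (hω j j.is_lt.le)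
  have hE_cyl : E ∩ ⋃ w : Fin m → Bool, wordCylinder x₀ w = ⋃ w ∈ good, wordCylinder x₀ w := by
    ext ω
    simp only [Set.mem_inter_iff, Set.mem_iUnion, Finset.mem_filter, Finset.mem_univ, true_and,
      exists_prop, good]
    constructor
    · rintro ⟨hωE, w, hω⟩
      exact ⟨w, by rwa [← hgap w ω hω, ← hE ω (by simpa using hω 0 (Nat.zero_le m))], hω⟩
    · rintro ⟨w, hw, hω⟩
      exact ⟨by rwa [hE ω (by simpa using hω 0 (Nat.zero_le m)), hgap w ω hω], w, hω⟩
  rw [← measure_inter_conull (hμ.measure_compl_iUnion_wordCylinder h₁ h₂), hE_cyl,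
    measure_biUnion_finset (fun w _ w' _ hne => pairwise_disjoint_wordCylinder x₀ hne)
      fun w _ => measurableSet_wordCylinder x₀ w,
    ENNReal.toReal_sum fun w _ => measure_ne_top μ _, gapExpect_eq_sum, Finset.sum_filter]
  refine Finset.sum_congr rfl fun w _ => ?_
  by_cases hw : gapSeq m (wordPath x₀ w) ∈ A <;> simp [hw, hμ.toReal_measure_wordCylinder]

theorem measure_le_of_isUpperSet (hμ : IsUrnProcess μ β 1 x₀) (hμ' : IsUrnProcess μ' β' 1 x₀)
    (hβ : 0 ≤ β) (hββ' : β' ≤ β) (h₁ : 0 < x₀.1) (h₂ : 0 < x₀.2) {A : Set (Fin m → ℕ)}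
    (hA : IsUpperSet A) {E : Set (ℕ → ℕ × ℕ)} (hE : ∀ ω, ω 0 = x₀ → (ω ∈ E ↔ gapSeq m ω ∈ A)) :
    μ' E ≤ μ E := by
  have := hμ.1
  have := hμ'.1
  rw [← ENNReal.toReal_le_toReal (measure_ne_top _ _) (measure_ne_top _ _),
    hμ.toReal_measure_eq_gapExpect h₁ h₂ hE, hμ'.toReal_measure_eq_gapExpect h₁ h₂ hE]
  exact gapExpect_le_of_exponent_le hβ hββ' hA.monotone_indicator_one h₁ h₂

theorem measure_le_of_isLowerSet (hμ : IsUrnProcess μ β 1 x₀) (hμ' : IsUrnProcess μ' β' 1 x₀)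
    (hβ : 0 ≤ β) (hββ' : β' ≤ β) (h₁ : 0 < x₀.1) (h₂ : 0 < x₀.2) {A : Set (Fin m → ℕ)}
    (hA : IsLowerSet A) {E : Set (ℕ → ℕ × ℕ)} (hE : ∀ ω, ω 0 = x₀ → (ω ∈ E ↔ gapSeq m ω ∈ A)) :
    μ E ≤ μ' E := by
  have := hμ.1
  have := hμ'.1
  rw [← ENNReal.toReal_le_toReal (measure_ne_top _ _) (measure_ne_top _ _),
    hμ.toReal_measure_eq_gapExpect h₁ h₂ hE, hμ'.toReal_measure_eq_gapExpect h₁ h₂ hE]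
  exact gapExpect_le_of_exponent_le_of_antitone hβ hββ' hA.antitone_indicator_one h₁ h₂

end IsUrnProcess

lemma gap_eq_zero_iff {x : ℕ × ℕ} : gap x = 0 ↔ x.1 = x.2 :=
  ⟨Nat.eq_of_dist_eq_zero, Nat.dist_eq_zero⟩

lemma count_tie_eq_card_gapSeq (ω : ℕ → ℕ × ℕ) (t : ℕ) :
    Nat.count (fun s => (ω s).1 = (ω s).2) t = #{j | gapSeq t ω j = 0} := by
  simp only [Nat.count_eq_card_filter_range, Finset.card_filter, gapSeq, gap_eq_zero_iff]
  exact (Fin.sum_univ_eq_sum_range (fun s => if (ω s).1 = (ω s).2 then 1 else 0) t).symm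

lemma le_nthTieTime_iff {n : ℕ} (hn : 1 ≤ n) (ω : ℕ → ℕ × ℕ) (t : ℕ) :
    (t : ℕ∞) ≤ nthTieTime n ω ↔ Nat.count (fun s => (ω s).1 = (ω s).2) t < n := by
  have hnum : ∀ s, numTiesUpTo ω s = Nat.count (fun s => (ω s).1 = (ω s).2) (s + 1) := fun s =>
    (Nat.count_eq_card_filter_range _ _).symm
  rw [nthTieTime, le_sInf_iff]
  constructor
  · intro h
    by_contra! hcount
    have hcard : ∀ hf : (Set.ofPred fun s => (ω s).1 = (ω s).2).Finite, n - 1 < #hf.toFinset :=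
      fun hf => (Nat.sub_one_lt_of_le hn hcount).trans_le (Nat.count_le_card hf t)
    have hlt : Nat.nth (fun s => (ω s).1 = (ω s).2) (n - 1) < t :=
      Nat.nth_lt_of_lt_count (by omega)
    have := h _ ⟨_, rfl, Nat.nth_mem _ hcard, by rw [hnum, Nat.count_nth_succ hcard]; omega⟩
    exact absurd (ENat.natCast_le_natCast.1 this) (not_le.2 hlt)
  · rintro hcount _ ⟨s, rfl, -, hs⟩
    by_contra! hst
    have := Nat.count_monotone (fun s => (ω s).1 = (ω s).2) (ENat.natCast_lt_natCast.1 hst)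
    rw [← hnum] at this
    omega

lemma isUpperSet_setOf_card_zero_lt (m n : ℕ) :
    IsUpperSet {l : Fin m → ℕ | #{j | l j = 0} < n} := fun _ _ hll' hl =>
  (Finset.card_le_card (Finset.monotone_filter_right _ fun j _ hj =>
    Nat.eq_zero_of_le_zero (hj ▸ hll' j))).trans_lt hl

lemma isLowerSet_setOf_exists_zero (m t : ℕ) :
    IsLowerSet {l : Fin m → ℕ | ∃ j : Fin m, t ≤ j ∧ l j = 0} := fun _ _ hl'l ⟨j, htj, hj⟩ =>
  ⟨j, htj, Nat.eq_zero_of_le_zero (hj ▸ hl'l j)⟩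

lemma durationTail_eq_iUnion (t : ℕ) :
    durationTail t = ⋃ m, {ω | ∃ j : Fin m, t ≤ j ∧ gapSeq m ω j = 0} := by
  ext ω
  simp only [durationTail, Set.mem_ofPred_eq, Set.mem_iUnion, gapSeq, gap_eq_zero_iff]
  exact ⟨fun ⟨s, hts, hs⟩ => ⟨s + 1, ⟨s, s.lt_succ_self⟩, hts, hs⟩,
    fun ⟨_, j, htj, hj⟩ => ⟨j, htj, hj⟩⟩

lemma monotone_setOf_exists_gapSeq_eq_zero (t : ℕ) :
    Monotone fun m => {ω : ℕ → ℕ × ℕ | ∃ j : Fin m, t ≤ j ∧ gapSeq m ω j = 0} :=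
  fun _ _ hm _ ⟨j, htj, hj⟩ => ⟨Fin.castLE hm j, htj, hj⟩

/-- For `β ≥ β' ≥ 0` and equal fitness (`r = 1`), the time of the `n`-th tie is
stochastically increasing in the feedback strength (`T_n(β,1,x₀) ⪰ T_n(β',1,x₀)` for `n ≥ 1`),
while the duration (time of the last tie) is stochastically decreasing
(`T(β,1,x₀) ⪯ T(β',1,x₀)`). -/
theorem stmt_1 (β β' : ℝ) (hβ'0 : 0 ≤ β') (hββ' : β' ≤ β)
    (x₀ : ℕ × ℕ) (hx₁ : 0 < x₀.1) (hx₂ : 0 < x₀.2)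
    (μ μ' : Measure (ℕ → ℕ × ℕ))
    (hμ : IsUrnProcess μ β 1 x₀) (hμ' : IsUrnProcess μ' β' 1 x₀) :
    (∀ n : ℕ, 1 ≤ n → ∀ t : ℕ,
      μ' {ω | (t : ℕ∞) ≤ nthTieTime n ω} ≤ μ {ω | (t : ℕ∞) ≤ nthTieTime n ω}) ∧
    (∀ t : ℕ, μ (durationTail t) ≤ μ' (durationTail t)) := by
  have hβ : 0 ≤ β := hβ'0.trans hββ'
  refine ⟨fun n hn t => ?_, fun t => ?_⟩
  · simp_rw [le_nthTieTime_iff hn, count_tie_eq_card_gapSeq]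
    exact hμ.measure_le_of_isUpperSet hμ' hβ hββ' hx₁ hx₂ (isUpperSet_setOf_card_zero_lt t n)
      fun _ _ => Iff.rfl
  · rw [durationTail_eq_iUnion, (monotone_setOf_exists_gapSeq_eq_zero t).measure_iUnion,
      (monotone_setOf_exists_gapSeq_eq_zero t).measure_iUnion]
    exact iSup_mono fun m => hμ.measure_le_of_isLowerSet hμ' hβ hββ' hx₁ hx₂
      (isLowerSet_setOf_exists_zero m t) fun _ _ => Iff.rfl
end
end

section
/- Let β ≥ β' ≥ 0, r, r' ≥ 1, and let x₀ = (x₀₁, x₀₂), x₀' = (x₀₁', x₀₂') be initial states with positive integer entries. Then the time of the first tie satisfies T₁(β, r, x₀) ⪰ T₁(β', r', x₀') if either (i) r ≥ r' and x₀₁ ≥ x₀₁' ≥ x₀₂' ≥ x₀₂, or (ii) r = r' and x₀₁ ≤ x₀₁' ≤ x₀₂' ≤ x₀₂. In particular, T₁(β, r, x₀) ⪰ T₁(β', r, x₀). -/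
open MeasureTheory Filter

noncomputable section

/-!
Let `P_t(x) = tieFreeProb β r t x` be the probability that the urn started at `x` has no tie at
the times `0, …, t - 1`, so that `P[T₁ ≥ t] = P_t(x₀)`. First-step analysis gives
`P_{t+1}(x) = p(x) P_t(x + e₁) + (1 - p(x)) P_t(x + e₂)` off the diagonal, with `p = upProb`.
When the first colour leads, `p` increases with `β`, with `r` and with the lead, and so does
`P_t`: by induction on `t`, since stepping away from the diagonal is better than stepping
towards it, a larger `p` weighting better continuations can only increase `P_{t+1}`. The case
where the second colour leads is the mirror image, exchanging the colours and `r` with `r⁻¹`.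
-/

namespace Urn

variable {β β' r r' : ℝ}

lemma rpow_mul_rpow_le_rpow_mul_rpow {u v u' v' : ℝ} (hβ' : 0 ≤ β') (hβ : β' ≤ β) (hu : 0 < u)
    (huu' : u ≤ u') (huv' : u ≤ v') (hv : 0 ≤ v) (hvv' : v ≤ v') :
    u ^ β * v ^ β' ≤ u' ^ β' * v' ^ β := by
  have hu' : 0 < u' := hu.trans_le huu'
  have hv' : 0 < v' := hu.trans_le huv'
  calc u ^ β * v ^ β' = u ^ β' * u ^ (β - β') * v ^ β' := by
        rw [← Real.rpow_add hu, add_sub_cancel]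
    _ ≤ u' ^ β' * v' ^ (β - β') * v' ^ β' := by gcongr
    _ = u' ^ β' * v' ^ β := by rw [mul_assoc, ← Real.rpow_add hv', sub_add_cancel]

lemma mul_add_one_sub_mul_le {p p' a a' b b' : ℝ} (hp : p' ≤ p) (hp₀ : 0 ≤ p) (hp₁ : p ≤ 1)
    (ha : a' ≤ a) (hb : b' ≤ b) (hba : b' ≤ a') :
    p' * a' + (1 - p') * b' ≤ p * a + (1 - p) * b := by
  nlinarith

def upProb (β r : ℝ) (x : ℕ × ℕ) : ℝ :=
  r * (x.1 : ℝ) ^ β / (r * (x.1 : ℝ) ^ β + (x.2 : ℝ) ^ β)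

lemma urnStep_nonneg (hr : 0 ≤ r) (x y : ℕ × ℕ) : 0 ≤ urnStep β r x y := by
  unfold urnStep
  split_ifs <;> positivity

lemma urnStep_up (β r : ℝ) (x : ℕ × ℕ) : urnStep β r x (x.1 + 1, x.2) = upProb β r x := by
  simp [urnStep, upProb]

lemma urnStep_down (hr : 0 ≤ r) {x : ℕ × ℕ} (hx : 0 < x.2) :
    urnStep β r x (x.1, x.2 + 1) = 1 - upProb β r x := by
  have hD : 0 < r * (x.1 : ℝ) ^ β + (x.2 : ℝ) ^ β := by positivity
  rw [urnStep, if_neg (by simp), if_pos rfl, upProb, eq_sub_iff_add_eq, ← add_div,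
    add_comm, div_self hD.ne']

lemma urnStep_eq_zero {x y : ℕ × ℕ} (hup : y ≠ (x.1 + 1, x.2)) (hdown : y ≠ (x.1, x.2 + 1)) :
    urnStep β r x y = 0 := by
  simp [urnStep, hup, hdown]

lemma urnStep_swap (hr : r ≠ 0) (x y : ℕ × ℕ) :
    urnStep β r⁻¹ x.swap y.swap = urnStep β r x y := by
  obtain ⟨a, b⟩ := x
  obtain ⟨c, d⟩ := y
  have hD : r⁻¹ * (b : ℝ) ^ β + (a : ℝ) ^ β = r⁻¹ * (r * (a : ℝ) ^ β + (b : ℝ) ^ β) := by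
    field_simp; ring
  simp only [urnStep, Prod.swap_prod_mk, Prod.mk.injEq, hD]
  split_ifs <;> first | omega | rfl | skip
  · rw [mul_div_mul_left _ _ (inv_ne_zero hr)]
  · rw [div_mul_eq_div_div_swap, div_inv_eq_mul]; ring

lemma upProb_nonneg (hr : 0 ≤ r) (x : ℕ × ℕ) : 0 ≤ upProb β r x := by
  rw [← urnStep_up]; exact urnStep_nonneg hr _ _

lemma upProb_le_one (hr : 0 ≤ r) {x : ℕ × ℕ} (hx : 0 < x.2) : upProb β r x ≤ 1 := by
  simpa [urnStep_down hr hx] using urnStep_nonneg (β := β) hr x (x.1, x.2 + 1)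

lemma upProb_mono (hβ' : 0 ≤ β') (hβ : β' ≤ β) (hr' : 0 ≤ r') (hrr : r' ≤ r) {x x' : ℕ × ℕ}
    (hx : 0 < x.2) (hx₂₁ : x.2 ≤ x.1) (h₁ : x'.1 ≤ x.1) (h₂ : x.2 ≤ x'.2) :
    upProb β' r' x' ≤ upProb β r x := by
  have hx' : 0 < x'.2 := hx.trans_le h₂
  have hr : 0 ≤ r := hr'.trans hrr
  have key : (x.2 : ℝ) ^ β * (x'.1 : ℝ) ^ β' ≤ (x'.2 : ℝ) ^ β' * (x.1 : ℝ) ^ β :=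
    rpow_mul_rpow_le_rpow_mul_rpow hβ' hβ (by exact_mod_cast hx) (by exact_mod_cast h₂)
      (by exact_mod_cast hx₂₁) (Nat.cast_nonneg _) (by exact_mod_cast h₁)
  unfold upProb
  rw [div_le_div_iff₀ (by positivity) (by positivity)]
  linear_combination mul_le_mul hrr key (by positivity) hr

def tieFreeProb (β r : ℝ) : ℕ → ℕ × ℕ → ℝ
  | 0, _ => 1
  | t + 1, x =>
      if x.1 = x.2 then 0
      else urnStep β r x (x.1 + 1, x.2) * tieFreeProb β r t (x.1 + 1, x.2)
        + urnStep β r x (x.1, x.2 + 1) * tieFreeProb β r t (x.1, x.2 + 1)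

lemma tieFreeProb_nonneg (hr : 0 ≤ r) (t : ℕ) (x : ℕ × ℕ) : 0 ≤ tieFreeProb β r t x := by
  induction t generalizing x with
  | zero => exact zero_le_one
  | succ t ih =>
    rw [tieFreeProb]
    split_ifs
    · exact le_rfl
    · exact add_nonneg (mul_nonneg (urnStep_nonneg hr _ _) (ih _))
        (mul_nonneg (urnStep_nonneg hr _ _) (ih _))

lemma tieFreeProb_succ_of_ne (hr : 0 ≤ r) {t : ℕ} {x : ℕ × ℕ} (hx : x.1 ≠ x.2) (hx₂ : 0 < x.2) :
    tieFreeProb β r (t + 1) x = upProb β r x * tieFreeProb β r t (x.1 + 1, x.2)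
      + (1 - upProb β r x) * tieFreeProb β r t (x.1, x.2 + 1) := by
  rw [tieFreeProb, if_neg hx, urnStep_up, urnStep_down hr hx₂]

lemma tieFreeProb_swap (hr : r ≠ 0) (t : ℕ) (x : ℕ × ℕ) :
    tieFreeProb β r⁻¹ t x.swap = tieFreeProb β r t x := by
  induction t generalizing x with
  | zero => rfl
  | succ t ih =>
    have hup := urnStep_swap (β := β) hr x (x.1 + 1, x.2)
    have hdown := urnStep_swap (β := β) hr x (x.1, x.2 + 1)
    have hup' := ih (x.1 + 1, x.2)
    have hdown' := ih (x.1, x.2 + 1)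
    simp only [Prod.swap_prod_mk] at hup hdown hup' hdown' ⊢
    simp only [tieFreeProb, Prod.fst_swap, Prod.snd_swap, eq_comm (a := x.2), hup, hdown, hup',
      hdown']
    split_ifs <;> ring

theorem tieFreeProb_le_of_snd_le_fst (hβ' : 0 ≤ β') (hβ : β' ≤ β) (hr' : 0 ≤ r') (hrr : r' ≤ r)
    (t : ℕ) {x x' : ℕ × ℕ} (hx : 0 < x.2) (h₁ : x'.1 ≤ x.1) (h₂ : x'.2 ≤ x'.1)
    (h₃ : x.2 ≤ x'.2) :
    tieFreeProb β' r' t x' ≤ tieFreeProb β r t x := by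
  induction t generalizing β r x x' with
  | zero => exact le_rfl
  | succ t ih =>
    have hr : 0 ≤ r := hr'.trans hrr
    rcases h₂.eq_or_lt with htie | h₂
    · rw [tieFreeProb, if_pos htie.symm]
      exact tieFreeProb_nonneg hr _ _
    have hx' : 0 < x'.2 := hx.trans_le h₃
    rw [tieFreeProb_succ_of_ne hr' h₂.ne' hx', tieFreeProb_succ_of_ne hr (by omega) hx]
    apply mul_add_one_sub_mul_le
    · exact upProb_mono hβ' hβ hr' hrr hx (by omega) h₁ h₃
    · exact upProb_nonneg hr x
    · exact upProb_le_one hr hx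
    · exact ih hβ hrr hx (Nat.succ_le_succ h₁) (Nat.le_succ_of_le h₂.le) h₃
    · exact ih hβ hrr x.2.succ_pos h₁ h₂ (Nat.succ_le_succ h₃)
    · exact ih le_rfl le_rfl hx' (Nat.le_succ _) h₂ (Nat.le_succ _)

theorem tieFreeProb_le_of_fst_le_snd (hβ' : 0 ≤ β') (hβ : β' ≤ β) (hr : 0 < r)
    (t : ℕ) {x x' : ℕ × ℕ} (hx : 0 < x.1) (h₁ : x.1 ≤ x'.1) (h₂ : x'.1 ≤ x'.2)
    (h₃ : x'.2 ≤ x.2) :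
    tieFreeProb β' r t x' ≤ tieFreeProb β r t x := by
  rw [← tieFreeProb_swap hr.ne', ← tieFreeProb_swap hr.ne']
  exact tieFreeProb_le_of_snd_le_fst hβ' hβ (inv_nonneg.2 hr.le) le_rfl t hx h₃ h₂ h₁

def cylinder (p : ℕ → ℕ × ℕ) (n : ℕ) : Set (ℕ → ℕ × ℕ) := {ω | ∀ s ≤ n, ω s = p s}

def tieFreeOn (a b : ℕ) : Set (ℕ → ℕ × ℕ) := {ω | ∀ s, a ≤ s → s < b → (ω s).1 ≠ (ω s).2}

lemma measurableSet_cylinder (p : ℕ → ℕ × ℕ) (n : ℕ) : MeasurableSet (cylinder p n) := by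
  unfold cylinder; measurability

lemma measurableSet_tieFreeOn (a b : ℕ) : MeasurableSet (tieFreeOn a b) := by
  unfold tieFreeOn; measurability

lemma mem_cylinder_update_succ {p : ℕ → ℕ × ℕ} {n : ℕ} {y : ℕ × ℕ} {ω : ℕ → ℕ × ℕ} :
    ω ∈ cylinder (Function.update p (n + 1) y) (n + 1) ↔ ω ∈ cylinder p n ∧ ω (n + 1) = y := by
  simp only [cylinder, Set.mem_ofPred_eq]
  refine ⟨fun h => ⟨fun s hs => ?_, by simpa using h (n + 1) le_rfl⟩, fun ⟨h, hy⟩ s hs => ?_⟩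
  · simpa [Function.update_of_ne (show s ≠ n + 1 by omega)] using h s (by omega)
  · rcases hs.lt_or_eq with hs | rfl
    · simpa [Function.update_of_ne (show s ≠ n + 1 by omega)] using h s (by omega)
    · simpa using hy

lemma cylinder_inter_tieFreeOn_succ {p : ℕ → ℕ × ℕ} {n : ℕ} (hp : (p n).1 ≠ (p n).2) (t : ℕ) :
    cylinder p n ∩ tieFreeOn n (n + (t + 1))
      = ⋃ y, cylinder (Function.update p (n + 1) y) (n + 1) ∩ tieFreeOn (n + 1) (n + 1 + t) := by
  ext ω
  simp only [Set.mem_inter_iff, Set.mem_iUnion, mem_cylinder_update_succ, tieFreeOn,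
    Set.mem_ofPred_eq]
  constructor
  · rintro ⟨hω, h⟩
    exact ⟨_, ⟨hω, rfl⟩, fun s hs hst => h s (by omega) (by omega)⟩
  · rintro ⟨_, ⟨hω, -⟩, h⟩
    refine ⟨hω, fun s hs hst => ?_⟩
    rcases hs.eq_or_lt with rfl | hs
    · rwa [hω _ le_rfl]
    · exact h s hs (by omega)

lemma prod_urnStep_update (β r : ℝ) (p : ℕ → ℕ × ℕ) (n : ℕ) (y : ℕ × ℕ) :
    ∏ s ∈ Finset.range (n + 1), urnStep β r (Function.update p (n + 1) y s)
        (Function.update p (n + 1) y (s + 1))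
      = (∏ s ∈ Finset.range n, urnStep β r (p s) (p (s + 1))) * urnStep β r (p n) y := by
  rw [Finset.prod_range_succ, Function.update_self, Function.update_of_ne (by omega)]
  congr 1
  refine Finset.prod_congr rfl fun s hs => ?_
  rw [Finset.mem_range] at hs
  rw [Function.update_of_ne (by omega), Function.update_of_ne (by omega)]

lemma tsum_ofReal_urnStep_mul (hr : 0 ≤ r) (x : ℕ × ℕ) {g : ℕ × ℕ → ℝ} (hg : ∀ y, 0 ≤ g y) :
    ∑' y, ENNReal.ofReal (urnStep β r x y * g y)
      = ENNReal.ofReal (urnStep β r x (x.1 + 1, x.2) * g (x.1 + 1, x.2)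
          + urnStep β r x (x.1, x.2 + 1) * g (x.1, x.2 + 1)) := by
  have hne : (x.1 + 1, x.2) ≠ (x.1, x.2 + 1) := by simp
  rw [tsum_eq_sum (s := {(x.1 + 1, x.2), (x.1, x.2 + 1)}), Finset.sum_pair hne,
    ← ENNReal.ofReal_add (mul_nonneg (urnStep_nonneg hr _ _) (hg _))
      (mul_nonneg (urnStep_nonneg hr _ _) (hg _))]
  intro y hy
  simp only [Finset.mem_insert, Finset.mem_singleton, not_or] at hy
  rw [urnStep_eq_zero hy.1 hy.2, zero_mul, ENNReal.ofReal_zero]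

lemma numTiesUpTo_eq_one {ω : ℕ → ℕ × ℕ} {s : ℕ} (hs : (ω s).1 = (ω s).2)
    (hmin : ∀ j < s, (ω j).1 ≠ (ω j).2) : numTiesUpTo ω s = 1 := by
  rw [numTiesUpTo, Finset.card_eq_one]
  refine ⟨s, Finset.ext fun j => ?_⟩
  simp only [Finset.mem_filter, Finset.mem_range, Finset.mem_singleton]
  constructor
  · rintro ⟨hj, htj⟩
    by_contra hne
    exact hmin j (by omega) htj
  · rintro rfl
    exact ⟨by omega, hs⟩

lemma le_nthTieTime_one_iff {ω : ℕ → ℕ × ℕ} {t : ℕ} :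
    (t : ℕ∞) ≤ nthTieTime 1 ω ↔ ω ∈ tieFreeOn 0 t := by
  simp only [nthTieTime, le_sInf_iff, tieFreeOn, Set.mem_ofPred_eq]
  constructor
  · intro h s _ hst htie
    have hex : ∃ j, (ω j).1 = (ω j).2 := ⟨s, htie⟩
    have hfirst := h _ ⟨Nat.find hex, rfl, Nat.find_spec hex,
      numTiesUpTo_eq_one (Nat.find_spec hex) fun j hj => Nat.find_min hex hj⟩
    have := Nat.find_min' hex htie
    norm_cast at hfirst
    omega
  · rintro h _ ⟨s, rfl, htie, -⟩
    by_contra! hs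
    exact h s (Nat.zero_le s) (by exact_mod_cast hs) htie

variable {μ μ' : Measure (ℕ → ℕ × ℕ)} {x₀ x₀' : ℕ × ℕ}

lemma measure_cylinder (hμ : IsUrnProcess μ β r x₀) {p : ℕ → ℕ × ℕ} (hp : p 0 = x₀) (n : ℕ) :
    μ (cylinder p n) = ENNReal.ofReal (∏ s ∈ Finset.range n, urnStep β r (p s) (p (s + 1))) := by
  have := hμ.1
  rw [← hμ.2 n p hp, ENNReal.ofReal_toReal (measure_ne_top μ _)]
  rfl

lemma measure_cylinder_inter_tieFreeOn (hr : 0 ≤ r) (hμ : IsUrnProcess μ β r x₀)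
    (t : ℕ) {p : ℕ → ℕ × ℕ} (hp : p 0 = x₀) (n : ℕ) :
    μ (cylinder p n ∩ tieFreeOn n (n + t)) = ENNReal.ofReal
      ((∏ s ∈ Finset.range n, urnStep β r (p s) (p (s + 1))) * tieFreeProb β r t (p n)) := by
  induction t generalizing p n with
  | zero =>
    have : tieFreeOn n (n + 0) = Set.univ := Set.eq_univ_of_forall fun ω s hs hs' => by omega
    rw [this, Set.inter_univ, measure_cylinder hμ hp, tieFreeProb, mul_one]
  | succ t ih =>
    by_cases htie : (p n).1 = (p n).2
    · have : cylinder p n ∩ tieFreeOn n (n + (t + 1)) = ∅ :=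
        Set.eq_empty_of_forall_notMem fun ω ⟨hω, h⟩ =>
          h n le_rfl (by omega) (by rwa [hω n le_rfl])
      rw [this, tieFreeProb, if_pos htie, mul_zero, ENNReal.ofReal_zero, measure_empty]
    have hP : 0 ≤ ∏ s ∈ Finset.range n, urnStep β r (p s) (p (s + 1)) :=
      Finset.prod_nonneg fun s _ => urnStep_nonneg hr _ _
    have hdisj : Pairwise (Function.onFun Disjoint fun y =>
        cylinder (Function.update p (n + 1) y) (n + 1) ∩ tieFreeOn (n + 1) (n + 1 + t)) :=
      fun y y' hne => Set.disjoint_left.2 fun ω ⟨hω, _⟩ ⟨hω', _⟩ =>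
        hne ((mem_cylinder_update_succ.1 hω).2.symm.trans (mem_cylinder_update_succ.1 hω').2)
    have hstep : ∀ y, μ (cylinder (Function.update p (n + 1) y) (n + 1)
        ∩ tieFreeOn (n + 1) (n + 1 + t)) = ENNReal.ofReal (urnStep β r (p n) y
          * ((∏ s ∈ Finset.range n, urnStep β r (p s) (p (s + 1))) * tieFreeProb β r t y)) := by
      intro y
      rw [ih (by rwa [Function.update_of_ne (by omega)]), prod_urnStep_update,
        Function.update_self]
      ring_nf
    rw [cylinder_inter_tieFreeOn_succ htie, measure_iUnion hdisj
      fun y => (measurableSet_cylinder _ _).inter (measurableSet_tieFreeOn _ _)]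
    simp_rw [hstep]
    rw [tsum_ofReal_urnStep_mul hr _ fun y => mul_nonneg hP (tieFreeProb_nonneg hr t y),
      tieFreeProb, if_neg htie]
    ring_nf

lemma measure_le_nthTieTime_one (hr : 0 ≤ r) (hμ : IsUrnProcess μ β r x₀) (t : ℕ) :
    μ {ω | (t : ℕ∞) ≤ nthTieTime 1 ω} = ENNReal.ofReal (tieFreeProb β r t x₀) := by
  have := hμ.1
  have hx₀ : μ (cylinder (fun _ => x₀) 0)ᶜ = 0 :=
    (prob_compl_eq_zero_iff (measurableSet_cylinder _ _)).2
      (by simp [measure_cylinder hμ (p := fun _ => x₀) rfl 0])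
  have hformula := measure_cylinder_inter_tieFreeOn hr hμ t (p := fun _ => x₀) rfl 0
  simp only [Finset.range_zero, Finset.prod_empty, one_mul, zero_add] at hformula
  simp_rw [le_nthTieTime_one_iff, Set.ofPred_mem_eq]
  rw [← hformula, Set.inter_comm, measure_inter_conull hx₀]

lemma measure_le_nthTieTime_one_mono (hr : 0 ≤ r) (hr' : 0 ≤ r')
    (hμ : IsUrnProcess μ β r x₀) (hμ' : IsUrnProcess μ' β' r' x₀')
    (h : ∀ t, tieFreeProb β' r' t x₀' ≤ tieFreeProb β r t x₀) (t : ℕ) :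
    μ' {ω | (t : ℕ∞) ≤ nthTieTime 1 ω} ≤ μ {ω | (t : ℕ∞) ≤ nthTieTime 1 ω} := by
  rw [measure_le_nthTieTime_one hr hμ, measure_le_nthTieTime_one hr' hμ']
  exact ENNReal.ofReal_le_ofReal (h t)

end Urn

open Urn

theorem stmt_2_general (β β' r r' : ℝ) (hβ'0 : 0 ≤ β') (hββ' : β' ≤ β) (hr : 1 ≤ r) (hr' : 1 ≤ r')
    (x₀ x₀' : ℕ × ℕ) (hx₁ : 0 < x₀.1) (hx₂ : 0 < x₀.2)
    (μ μ' : Measure (ℕ → ℕ × ℕ))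
    (hμ : IsUrnProcess μ β r x₀) (hμ' : IsUrnProcess μ' β' r' x₀') :
    (((r' ≤ r ∧ x₀'.1 ≤ x₀.1 ∧ x₀'.2 ≤ x₀'.1 ∧ x₀.2 ≤ x₀'.2) ∨
      (r = r' ∧ x₀.1 ≤ x₀'.1 ∧ x₀'.1 ≤ x₀'.2 ∧ x₀'.2 ≤ x₀.2)) →
      ∀ t : ℕ, μ' {ω | (t : ℕ∞) ≤ nthTieTime 1 ω} ≤ μ {ω | (t : ℕ∞) ≤ nthTieTime 1 ω}) ∧
    (∀ ν ν' : Measure (ℕ → ℕ × ℕ), IsUrnProcess ν β r x₀ → IsUrnProcess ν' β' r x₀ →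
      ∀ t : ℕ, ν' {ω | (t : ℕ∞) ≤ nthTieTime 1 ω} ≤ ν {ω | (t : ℕ∞) ≤ nthTieTime 1 ω}) := by
  have hr₀ : 0 < r := zero_lt_one.trans_le hr
  have hr₀' : 0 ≤ r' := zero_le_one.trans hr'
  refine ⟨fun hcase => ?_, fun ν ν' hν hν' => ?_⟩
  · refine measure_le_nthTieTime_one_mono hr₀.le hr₀' hμ hμ' fun t => ?_
    rcases hcase with ⟨hrr, h₁, h₂, h₃⟩ | ⟨rfl, h₁, h₂, h₃⟩
    · exact tieFreeProb_le_of_snd_le_fst hβ'0 hββ' hr₀' hrr t hx₂ h₁ h₂ h₃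
    · exact tieFreeProb_le_of_fst_le_snd hβ'0 hββ' hr₀ t hx₁ h₁ h₂ h₃
  · refine measure_le_nthTieTime_one_mono hr₀.le hr₀.le hν hν' fun t => ?_
    rcases le_total x₀.2 x₀.1 with h | h
    · exact tieFreeProb_le_of_snd_le_fst hβ'0 hββ' hr₀.le le_rfl t hx₂ le_rfl h le_rfl
    · exact tieFreeProb_le_of_fst_le_snd hβ'0 hββ' hr₀ t hx₁ le_rfl h le_rfl

/-- For `β ≥ β' ≥ 0`, `r, r' ≥ 1`, the time of the first tie satisfies
`T₁(β,r,x₀) ⪰ T₁(β',r',x₀')` if either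
(i) `r ≥ r'` and `x₀₁ ≥ x₀₁' ≥ x₀₂' ≥ x₀₂`, or (ii) `r = r'` and `x₀₁ ≤ x₀₁' ≤ x₀₂' ≤ x₀₂`.
In particular, `T₁(β,r,x₀) ⪰ T₁(β',r,x₀)`. -/
theorem stmt_2 (β β' r r' : ℝ) (hβ'0 : 0 ≤ β') (hββ' : β' ≤ β) (hr : 1 ≤ r) (hr' : 1 ≤ r')
    (x₀ x₀' : ℕ × ℕ) (hx₁ : 0 < x₀.1) (hx₂ : 0 < x₀.2) (hx₁' : 0 < x₀'.1) (hx₂' : 0 < x₀'.2)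
    (μ μ' : Measure (ℕ → ℕ × ℕ))
    (hμ : IsUrnProcess μ β r x₀) (hμ' : IsUrnProcess μ' β' r' x₀') :
    (((r' ≤ r ∧ x₀'.1 ≤ x₀.1 ∧ x₀'.2 ≤ x₀'.1 ∧ x₀.2 ≤ x₀'.2) ∨
      (r = r' ∧ x₀.1 ≤ x₀'.1 ∧ x₀'.1 ≤ x₀'.2 ∧ x₀'.2 ≤ x₀.2)) →
      ∀ t : ℕ, μ' {ω | (t : ℕ∞) ≤ nthTieTime 1 ω} ≤ μ {ω | (t : ℕ∞) ≤ nthTieTime 1 ω}) ∧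
    (∀ ν ν' : Measure (ℕ → ℕ × ℕ), IsUrnProcess ν β r x₀ → IsUrnProcess ν' β' r x₀ →
      ∀ t : ℕ, ν' {ω | (t : ℕ∞) ≤ nthTieTime 1 ω} ≤ ν {ω | (t : ℕ∞) ≤ nthTieTime 1 ω}) :=
  stmt_2_general β β' r r' hβ'0 hββ' hr hr' x₀ x₀' hx₁ hx₂ μ μ' hμ hμ'
end
end
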